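/- Let p : ℝ → Matₙ(ℝ) be continuous with p(u) symmetric for all u, and let L : ℝ → Matₙ(ℝ) be a twice differentiable solution of the Jacobi equation L''(u) + p(u)·L(u) = 0 such that for some u₀, L(u₀) is invertible and L'(u₀)·L(u₀)⁻¹ is symmetric. Then the degeneracy set 𝕊 = { u ∈ ℝ : det L(u) = 0 } has no accumulation point in ℝ; i.e., 𝕊 is a discrete (closed) subset of ℝ. -/

import Mathlib

/-!
The Wronskian `Lᵀ L' - L'ᵀ L` of a solution of the Jacobi equation with symmetric `p` is constant
and vanishes at `u₀`, so `L(x)ᵀ L'(x)` is symmetric for every `x`. Uniqueness for the linear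
equation `y'' + p y = 0` gives `ker L(x) ∩ ker L'(x) = 0`: for a common kernel vector `v` the
solution `u ↦ L(u) v` vanishes identically, contradicting the invertibility of `L(u₀)`.

These two facts give the pencil bound `|h| ‖v‖ ≤ C ‖(L(x) + h L'(x)) v‖` for small `h`. Write
`v = a + b` with `L(x) a = 0` and `‖b‖ ≲ ‖L(x) v‖`; by symmetry `L'(x) a` is orthogonal to the
range of `L(x)`, so pairing with `L'(x) a` isolates `h ‖L'(x) a‖²`, and `L'(x)` is injective on
`ker L(x)`. As `L(y) = L(x) + (y - x) L'(x) + o(y - x)`, `L(y)` is invertible for `y ≠ x` near `x`.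
-/

open Matrix Set Filter

attribute [local instance] Matrix.frobeniusNormedAddCommGroup Matrix.frobeniusNormedSpace

open Function Topology RealInnerProductSpace

section Wronskian

variable {R : Type*} [NormedRing R] [NormedAlgebra ℝ R] [StarRing R] [ContinuousStar R]
  [StarModule ℝ R]

theorem wronskian_eq_of_jacobi {p L L' L'' : ℝ → R} (hp : ∀ t, IsSelfAdjoint (p t))
    (hL : ∀ t, HasDerivAt L (L' t) t) (hL' : ∀ t, HasDerivAt L' (L'' t) t)
    (hJ : ∀ t, L'' t + p t * L t = 0) (s t : ℝ) :
    star (L t) * L' t - star (L' t) * L t = star (L s) * L' s - star (L' s) * L s := by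
  have hW : ∀ t, HasDerivAt (fun t => star (L t) * L' t - star (L' t) * L t) 0 t := by
    intro t
    refine (((hL t).star.mul (hL' t)).sub ((hL' t).star.mul (hL t))).congr_deriv ?_
    rw [eq_neg_of_add_eq_zero_left (hJ t), star_neg, star_mul, (hp t).star_eq]
    noncomm_ring
  exact is_const_of_deriv_eq_zero (fun t => (hW t).differentiableAt) (fun t => (hW t).deriv) t s

end Wronskian

section LinearODE

variable {F : Type*} [NormedAddCommGroup F] [NormedSpace ℝ F]

theorem eq_zero_of_hasDerivAt_clm_apply {A : ℝ → F →L[ℝ] F} (hA : Continuous A) {f : ℝ → F}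
    (hf : ∀ t, HasDerivAt f (A t (f t)) t) {a : ℝ} (ha : f a = 0) (b : ℝ) : f b = 0 := by
  obtain ⟨c, d, hb, ha'⟩ : ∃ c d : ℝ, b ∈ Ioo c d ∧ a ∈ Ioo c d :=
    ⟨min a b - 1, max a b + 1, by grind, by grind⟩
  obtain ⟨M, hM⟩ := (isCompact_Icc (a := c) (b := d)).exists_bound_of_continuousOn hA.continuousOn
  have hlip : ∀ t ∈ Ioo c d, LipschitzOnWith M.toNNReal (A t) univ := fun t ht =>
    ((A t).lipschitz.weaken (by
      rw [← NNReal.coe_le_coe, coe_nnnorm, Real.coe_toNNReal']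
      exact (hM t (Ioo_subset_Icc_self ht)).trans (le_max_left _ _))).lipschitzOnWith
  exact ODE_solution_unique_of_mem_Ioo (g := 0) hlip ha' (fun t _ => ⟨hf t, trivial⟩)
    (fun t _ => ⟨by simp, trivial⟩) ha hb

theorem eq_zero_of_jacobi {P : ℝ → F →L[ℝ] F} (hP : Continuous P) {y y' y'' : ℝ → F}
    (hy : ∀ t, HasDerivAt y (y' t) t) (hy' : ∀ t, HasDerivAt y' (y'' t) t)
    (hJ : ∀ t, y'' t + P t (y t) = 0) {a : ℝ} (ha : y a = 0) (ha' : y' a = 0) (b : ℝ) :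
    y b = 0 := by
  let A : ℝ → F × F →L[ℝ] F × F := fun t =>
    (ContinuousLinearMap.snd ℝ F F).prod (-(P t).comp (ContinuousLinearMap.fst ℝ F F))
  have hA : Continuous A := (ContinuousLinearMap.prodₗᵢ ℝ).continuous.comp
    (continuous_const.prodMk (hP.clm_comp continuous_const).neg)
  have h := eq_zero_of_hasDerivAt_clm_apply hA (f := fun t => (y t, y' t))
    (fun t => ((hy t).prodMk (hy' t)).congr_deriv ?_) (a := a) (by simp [ha, ha']) b
  · exact congrArg Prod.fst h
  · simp [A, eq_neg_of_add_eq_zero_left (hJ t)]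

end LinearODE

namespace ContinuousLinearMap

section

variable {E F : Type*} [NormedAddCommGroup E] [InnerProductSpace ℝ E]
  [NormedAddCommGroup F] [NormedSpace ℝ F]

theorem exists_norm_le_mul_norm_of_mem [FiniteDimensional ℝ E] (f : E →L[ℝ] F)
    {K : Submodule ℝ E} (hf : ∀ v ∈ K, f v = 0 → v = 0) :
    ∃ C, 0 ≤ C ∧ ∀ v ∈ K, ‖v‖ ≤ C * ‖f v‖ := by
  obtain ⟨C, -, hC⟩ := (f.toLinearMap ∘ₗ K.subtype).exists_antilipschitzWith <|
    LinearMap.ker_eq_bot'.2 fun v hv => Subtype.ext (hf v v.2 hv)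
  exact ⟨C, C.2, fun v hv => ZeroHomClass.bound_of_antilipschitz _ hC ⟨v, hv⟩⟩

theorem exists_norm_sub_le_mul_norm [FiniteDimensional ℝ E] (X : E →L[ℝ] F) :
    ∃ C, 0 ≤ C ∧ ∀ v, ∃ a, X a = 0 ∧ ‖v - a‖ ≤ C * ‖X v‖ := by
  set K := LinearMap.ker X.toLinearMap
  obtain ⟨C, hC0, hC⟩ := X.exists_norm_le_mul_norm_of_mem (K := Kᗮ) fun v hv hXv =>
    inner_self_eq_zero.1 (Submodule.inner_right_of_mem_orthogonal hXv hv)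
  refine ⟨C, hC0, fun v => ⟨K.starProjection v, K.starProjection_apply_mem v, ?_⟩⟩
  have hXa : X (K.starProjection v) = 0 := K.starProjection_apply_mem v
  simpa [hXa] using hC _ (K.sub_starProjection_mem_orthogonal v)

theorem abs_mul_norm_apply_le [CompleteSpace E] {X U : E →L[ℝ] E}
    (hXU : star X * U = star U * X) {a : E} (ha : X a = 0) (h : ℝ) (v : E) :
    |h| * ‖U a‖ ≤ ‖(X + h • U) v‖ + |h| * ‖U (v - a)‖ := by
  set b := v - a
  have hUaXb : ⟪U a, X b⟫ = 0 := by
    have := DFunLike.congr_fun hXU a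
    rw [mul_apply_eq_comp, mul_apply_eq_comp, ha, map_zero, star_eq_adjoint] at this
    rw [← adjoint_inner_left, this, inner_zero_left]
  have hw : ⟪U a, (X + h • U) v⟫ = h * ‖U a‖ ^ 2 + h * ⟪U a, U b⟫ := by
    have hv : v = a + b := by simp [b]
    rw [hv, _root_.add_apply, _root_.smul_apply, map_add, map_add, ha, zero_add, inner_add_right,
      hUaXb, zero_add, real_inner_smul_right, inner_add_right, real_inner_self_eq_norm_sq]
    ring
  have hsq : |h| * ‖U a‖ ^ 2 ≤ ‖U a‖ * (‖(X + h • U) v‖ + |h| * ‖U b‖) := by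
    calc |h| * ‖U a‖ ^ 2 = |⟪U a, (X + h • U) v⟫ - h * ⟪U a, U b⟫| := by
          rw [hw, add_sub_cancel_right, abs_mul, abs_of_nonneg (sq_nonneg ‖U a‖)]
      _ ≤ |⟪U a, (X + h • U) v⟫| + |h| * |⟪U a, U b⟫| := by
          rw [← abs_mul]; exact abs_sub _ _
      _ ≤ ‖U a‖ * ‖(X + h • U) v‖ + |h| * (‖U a‖ * ‖U b‖) := by
          gcongr <;> exact abs_real_inner_le_norm _ _
      _ = ‖U a‖ * (‖(X + h • U) v‖ + |h| * ‖U b‖) := by ring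
  rcases (norm_nonneg (U a)).eq_or_lt with hUa | hUa
  · rw [← hUa, mul_zero]; positivity
  · rw [pow_two, ← mul_assoc, mul_comm _ ‖U a‖] at hsq
    exact le_of_mul_le_mul_left hsq hUa

theorem exists_abs_mul_norm_le_mul_norm_add_smul_apply [FiniteDimensional ℝ E]
    {X U : E →L[ℝ] E} (hXU : star X * U = star U * X) (hker : ∀ v, X v = 0 → U v = 0 → v = 0) :
    ∃ C > 0, ∀ᶠ h in 𝓝 (0 : ℝ), ∀ v, |h| * ‖v‖ ≤ C * ‖(X + h • U) v‖ := by
  obtain ⟨c₁, hc₁, hdist⟩ := X.exists_norm_sub_le_mul_norm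
  obtain ⟨c₂, hc₂, hU⟩ := U.exists_norm_le_mul_norm_of_mem (K := LinearMap.ker X.toLinearMap)
    fun v hXv hUv => hker v hXv hUv
  set A := (c₂ * ‖U‖ + 1) * c₁
  have habs : Tendsto (fun h : ℝ => |h|) (𝓝 0) (𝓝 0) := by
    simpa using (continuous_abs (G := ℝ)).tendsto 0
  have hle_one : ∀ᶠ h in 𝓝 (0 : ℝ), |h| ≤ 1 := habs.eventually (Iic_mem_nhds one_pos)
  have hle_half : ∀ᶠ h in 𝓝 (0 : ℝ), A * ‖U‖ * |h| ≤ 1 / 2 :=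
    (habs.const_mul (A * ‖U‖)).eventually (Iic_mem_nhds (by norm_num))
  refine ⟨2 * (c₂ + A) + 1, by positivity, ?_⟩
  filter_upwards [hle_one, hle_half] with h hh₁ hh₂ v
  obtain ⟨a, ha, hva⟩ := hdist v
  set w := ‖(X + h • U) v‖
  have hXv : ‖X v‖ ≤ w + |h| * ‖U‖ * ‖v‖ := by
    calc ‖X v‖ = ‖(X + h • U) v - h • U v‖ := by simp
      _ ≤ w + |h| * ‖U v‖ := by
          rw [← Real.norm_eq_abs, ← norm_smul]; exact norm_sub_le _ _
      _ ≤ w + |h| * ‖U‖ * ‖v‖ := by rw [mul_assoc]; gcongr; exact U.le_opNorm v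
  have hUa := abs_mul_norm_apply_le hXU ha h v
  have hUb : ‖U (v - a)‖ ≤ ‖U‖ * ‖v - a‖ := U.le_opNorm _
  have ha' : ‖a‖ ≤ c₂ * ‖U a‖ := hU a ha
  have hv : ‖v‖ ≤ ‖a‖ + ‖v - a‖ := by simpa using norm_add_le a (v - a)
  have hA : 0 ≤ A := by positivity
  have hw : 0 ≤ w := norm_nonneg _
  have key : |h| * ‖v‖ ≤ (c₂ + A) * w + 1 / 2 * (|h| * ‖v‖) :=
    calc |h| * ‖v‖ ≤ |h| * ‖a‖ + |h| * ‖v - a‖ := by rw [← mul_add]; gcongr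
      _ ≤ c₂ * (|h| * ‖U a‖) + |h| * ‖v - a‖ := by
          rw [mul_left_comm]; gcongr
      _ ≤ c₂ * (w + |h| * (‖U‖ * ‖v - a‖)) + |h| * ‖v - a‖ := by
          gcongr; exact hUa.trans (by gcongr)
      _ = c₂ * w + (c₂ * ‖U‖ + 1) * |h| * ‖v - a‖ := by ring
      _ ≤ c₂ * w + (c₂ * ‖U‖ + 1) * |h| * (c₁ * (w + |h| * ‖U‖ * ‖v‖)) := by
          gcongr; exact hva.trans (by gcongr)
      _ = c₂ * w + A * |h| * w + A * ‖U‖ * |h| * (|h| * ‖v‖) := by ring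
      _ ≤ c₂ * w + A * 1 * w + 1 / 2 * (|h| * ‖v‖) := by gcongr
      _ = (c₂ + A) * w + 1 / 2 * (|h| * ‖v‖) := by ring
  linarith

end

theorem eventually_injective_of_hasDerivAt {E F : Type*} [NormedAddCommGroup E]
    [NormedSpace ℝ E] [NormedAddCommGroup F] [NormedSpace ℝ F] {Λ : ℝ → E →L[ℝ] F}
    {Λ' : E →L[ℝ] F} {x : ℝ} (hΛ : HasDerivAt Λ Λ' x) {C : ℝ} (hC : 0 < C)
    (hbound : ∀ᶠ h in 𝓝 (0 : ℝ), ∀ v, |h| * ‖v‖ ≤ C * ‖(Λ x + h • Λ') v‖) :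
    ∀ᶠ y in 𝓝[≠] x, Injective (Λ y) := by
  have hrem := (hasDerivAt_iff_isLittleO.1 hΛ).def (c := 1 / (2 * C)) (by positivity)
  have hpencil : ∀ᶠ y in 𝓝 x, ∀ v, |y - x| * ‖v‖ ≤ C * ‖(Λ x + (y - x) • Λ') v‖ :=
    (tendsto_sub_nhds_zero_iff.2 tendsto_id).eventually hbound
  filter_upwards [nhdsWithin_le_nhds (hrem.and hpencil), self_mem_nhdsWithin]
    with y ⟨hy, hyv⟩ hyx
  refine (injective_iff_map_eq_zero _).2 fun v hv => ?_
  have hsplit : (Λ x + (y - x) • Λ') v = -((Λ y - Λ x - (y - x) • Λ') v) := by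
    simp [hv, add_comm]
  have : |y - x| * ‖v‖ ≤ 1 / 2 * (|y - x| * ‖v‖) :=
    calc |y - x| * ‖v‖ ≤ C * ‖(Λ y - Λ x - (y - x) • Λ') v‖ := by
          simpa only [hsplit, norm_neg] using hyv v
      _ ≤ C * (1 / (2 * C) * |y - x| * ‖v‖) := by
          gcongr
          exact (le_opNorm _ _).trans (by rw [← Real.norm_eq_abs]; gcongr)
      _ = 1 / 2 * (|y - x| * ‖v‖) := by field_simp
  have hpos : 0 < |y - x| := abs_pos.2 (sub_ne_zero.2 hyx)
  exact norm_le_zero_iff.1 (le_of_mul_le_mul_left (by linarith) hpos)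

end ContinuousLinearMap

theorem eventually_injective_of_jacobi {E : Type*} [NormedAddCommGroup E]
    [InnerProductSpace ℝ E] [FiniteDimensional ℝ E] {P Λ Λ' Λ'' : ℝ → E →L[ℝ] E}
    (hP : Continuous P) (hPsa : ∀ t, IsSelfAdjoint (P t)) (hΛ : ∀ t, HasDerivAt Λ (Λ' t) t)
    (hΛ' : ∀ t, HasDerivAt Λ' (Λ'' t) t) (hJ : ∀ t, Λ'' t + P t * Λ t = 0) {u₀ : ℝ}
    (hinj : Injective (Λ u₀)) (hlag : star (Λ u₀) * Λ' u₀ = star (Λ' u₀) * Λ u₀) (x : ℝ) :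
    ∀ᶠ y in 𝓝[≠] x, Injective (Λ y) := by
  have hlag_x : star (Λ x) * Λ' x = star (Λ' x) * Λ x :=
    sub_eq_zero.1 ((wronskian_eq_of_jacobi hPsa hΛ hΛ' hJ u₀ x).trans (sub_eq_zero.2 hlag))
  have hker : ∀ v, Λ x v = 0 → Λ' x v = 0 → v = 0 := fun v hv hv' =>
    hinj <| (map_zero (Λ u₀)).symm ▸ eq_zero_of_jacobi hP (y := fun t => Λ t v)
      (y' := fun t => Λ' t v) (y'' := fun t => Λ'' t v)
      (fun t => ((hΛ t).clm_apply (hasDerivAt_const t v)).congr_deriv (by simp))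
      (fun t => ((hΛ' t).clm_apply (hasDerivAt_const t v)).congr_deriv (by simp))
      (fun t => by simpa using DFunLike.congr_fun (hJ t) v) hv hv' u₀
  obtain ⟨C, hC, hbound⟩ :=
    ContinuousLinearMap.exists_abs_mul_norm_le_mul_norm_add_smul_apply hlag_x hker
  exact ContinuousLinearMap.eventually_injective_of_hasDerivAt (hΛ x) hC hbound

namespace Matrix

variable {m : Type*} [Fintype m] [DecidableEq m]

theorem transpose_mul_eq_of_isUnit_of_transpose_mul_inv {R : Type*} [CommRing R]
    {A B : Matrix m m R} (hA : IsUnit A) (h : (B * A⁻¹)ᵀ = B * A⁻¹) : Aᵀ * B = Bᵀ * A := by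
  have hA' := (isUnit_iff_isUnit_det A).1 hA
  calc Aᵀ * B = Aᵀ * (B * A⁻¹) * A := by
        rw [Matrix.mul_assoc, Matrix.mul_assoc, nonsing_inv_mul _ hA', Matrix.mul_one]
    _ = Aᵀ * (B * A⁻¹)ᵀ * A := by rw [h]
    _ = Bᵀ * A := by
      rw [transpose_mul, transpose_nonsing_inv, ← Matrix.mul_assoc,
        mul_nonsing_inv _ (by rwa [det_transpose]), Matrix.one_mul]

theorem injective_toEuclideanCLM_iff {A : Matrix m m ℝ} :
    Injective (toEuclideanCLM (n := m) (𝕜 := ℝ) A) ↔ IsUnit A := by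
  rw [← mulVec_injective_iff_isUnit]
  change Injective ((WithLp.equiv 2 (m → ℝ)).symm ∘ A.mulVec ∘ WithLp.equiv 2 (m → ℝ)) ↔ _
  rw [EquivLike.comp_injective, EquivLike.injective_comp]

theorem continuous_toEuclideanCLM {f : ℝ → Matrix m m ℝ} (hf : Continuous f) :
    Continuous fun t => toEuclideanCLM (n := m) (𝕜 := ℝ) (f t) :=
  (LinearMap.toContinuousLinearMap
    (toEuclideanCLM (n := m) (𝕜 := ℝ)).toAlgEquiv.toLinearMap).continuous.comp hf

theorem hasDerivAt_toEuclideanCLM {f : ℝ → Matrix m m ℝ} {f' : Matrix m m ℝ} {x : ℝ}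
    (hf : HasDerivAt f f' x) :
    HasDerivAt (fun t => toEuclideanCLM (n := m) (𝕜 := ℝ) (f t))
      (toEuclideanCLM (n := m) (𝕜 := ℝ) f') x :=
  (LinearMap.toContinuousLinearMap
    (toEuclideanCLM (n := m) (𝕜 := ℝ)).toAlgEquiv.toLinearMap).hasFDerivAt.comp_hasDerivAt x hf

end Matrix

theorem degeneracy_set_discrete {n : ℕ}
    (p L L' L'' : ℝ → Matrix (Fin n) (Fin n) ℝ)
    (hp : Continuous p)
    (hpsym : ∀ u, (p u)ᵀ = p u)
    (hL : ∀ u, HasDerivAt L (L' u) u)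
    (hL' : ∀ u, HasDerivAt L' (L'' u) u)
    (hJacobi : ∀ u, L'' u + p u * L u = 0)
    (u₀ : ℝ) (hu₀ : IsUnit (L u₀))
    (hsym : (L' u₀ * (L u₀)⁻¹)ᵀ = L' u₀ * (L u₀)⁻¹) :
    ∀ x : ℝ, ¬ AccPt x (Filter.principal {u : ℝ | (L u).det = 0}) := by
  intro x
  set τ := toEuclideanCLM (n := Fin n) (𝕜 := ℝ)
  have hstar : ∀ A : Matrix (Fin n) (Fin n) ℝ, star (τ A) = τ Aᵀ := fun A => by
    rw [← map_star, star_eq_conjTranspose, conjTranspose_eq_transpose_of_trivial]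
  have hinj : ∀ᶠ y in 𝓝[≠] x, Injective (τ (L y)) := by
    refine eventually_injective_of_jacobi (continuous_toEuclideanCLM hp)
      (fun t => (hstar (p t)).trans (congrArg τ (hpsym t)))
      (fun t => hasDerivAt_toEuclideanCLM (hL t)) (fun t => hasDerivAt_toEuclideanCLM (hL' t))
      (fun t => by rw [← map_mul, ← map_add, hJacobi, map_zero])
      (injective_toEuclideanCLM_iff.2 hu₀) ?_ x
    rw [hstar, hstar, ← map_mul, ← map_mul,
      transpose_mul_eq_of_isUnit_of_transpose_mul_inv hu₀ hsym]
  rw [accPt_iff_frequently_nhdsNE]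
  intro hdet
  obtain ⟨y, hdet_y, hinj_y⟩ := (hdet.and_eventually hinj).exists
  exact ((isUnit_iff_isUnit_det _).1 (injective_toEuclideanCLM_iff.1 hinj_y)).ne_zero hdet_y
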